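/- arXiv:2112.01728 — 7 statements merged into one kernel-verified Lean document; each statement's English description precedes it below -/
import Mathlib

section
/- Let X be a normed space, C a nonempty closed convex subset of X, and r > d(0,C). Define the truncated set C^r := C ∩ B(0,r), the intersection of C with the closed ball of radius r centered at the origin. Then for every x with ‖x‖ ≤ r, one has d(x, C^r) ≤ (2r/(r − d(0,C))) · d(x, C). -/
/-!
If `c ∈ C` lies outside the ball of radius `r` and `c₀ ∈ C` has norm `s < r`, slide from `c`
towards `c₀` until the norm drops to `r`. This moves the point by the fraction
`(‖c‖ - r) / (‖c‖ - s)` of `‖c - c₀‖ ≤ ‖c‖ + s`, and `‖c‖ - r ≤ ‖x - c‖` when `‖x‖ ≤ r`, so the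
distance from `x` grows by at most the factor `1 + (r + s) / (r - s) = 2r / (r - s)`.
Letting `s` decrease to `d(0, C)` gives the estimate.
-/

open Metric Set Filter Topology

section

variable {X : Type*} [NormedAddCommGroup X] [NormedSpace ℝ X]

theorem exists_mem_segment_mem_closedBall_dist_le {c₀ c x : X} {r : ℝ} (hc₀ : ‖c₀‖ < r)
    (hx : ‖x‖ ≤ r) :
    ∃ z ∈ segment ℝ c₀ c, z ∈ closedBall 0 r ∧ dist x z ≤ 2 * r / (r - ‖c₀‖) * dist x c := by
  set s := ‖c₀‖
  have hs : 0 ≤ s := norm_nonneg c₀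
  have hrs : 0 < r - s := by linarith
  by_cases hcr : ‖c‖ ≤ r
  · refine ⟨c, right_mem_segment ℝ c₀ c, mem_closedBall_zero_iff.mpr hcr, ?_⟩
    have hK : 1 ≤ 2 * r / (r - s) := by rw [le_div_iff₀ hrs]; linarith
    exact le_mul_of_one_le_left dist_nonneg hK
  replace hcr := not_le.mp hcr
  have hcs : 0 < ‖c‖ - s := by linarith
  set t := (‖c‖ - r) / (‖c‖ - s)
  have ht0 : 0 ≤ t := div_nonneg (by linarith) hcs.le
  have ht1 : t ≤ 1 := by rw [div_le_one hcs]; linarith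
  refine ⟨t • c₀ + (1 - t) • c, ⟨t, 1 - t, ht0, by linarith, by ring, rfl⟩, ?_, ?_⟩
  · rw [mem_closedBall_zero_iff]
    calc ‖t • c₀ + (1 - t) • c‖ ≤ t * s + (1 - t) * ‖c‖ := by
          refine (norm_add_le _ _).trans_eq ?_
          rw [norm_smul, norm_smul, Real.norm_of_nonneg ht0, Real.norm_of_nonneg (by linarith)]
      _ = r := by simp only [t]; field_simp; ring
  have hxc : ‖c‖ - r ≤ dist x c := by
    rw [dist_comm, dist_eq_norm]; linarith [norm_sub_norm_le c x]
  have hstep : t * ‖c - c₀‖ ≤ dist x c * ((r + s) / (r - s)) := by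
    calc t * ‖c - c₀‖ ≤ (‖c‖ - r) * ((‖c‖ + s) / (‖c‖ - s)) := by
          rw [mul_div_assoc', div_mul_eq_mul_div]
          gcongr
          exact norm_sub_le c c₀
      _ ≤ dist x c * ((r + s) / (r - s)) := by
          refine mul_le_mul hxc ?_ (by positivity) dist_nonneg
          rw [div_le_div_iff₀ hcs hrs]; nlinarith
  calc dist x (t • c₀ + (1 - t) • c) = ‖(x - c) + t • (c - c₀)‖ := by
        rw [dist_eq_norm]; congr 1; module
    _ ≤ dist x c + t * ‖c - c₀‖ := by
        refine (norm_add_le _ _).trans_eq ?_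
        rw [norm_smul, Real.norm_of_nonneg ht0, dist_eq_norm]
    _ ≤ dist x c * (1 + (r + s) / (r - s)) := by linarith
    _ = 2 * r / (r - s) * dist x c := by field_simp; ring

theorem Convex.infDist_inter_closedBall_le {C : Set X} (hC : Convex ℝ C) {c₀ x : X} {r : ℝ}
    (hc₀C : c₀ ∈ C) (hc₀ : ‖c₀‖ < r) (hx : ‖x‖ ≤ r) :
    infDist x (C ∩ closedBall 0 r) ≤ 2 * r / (r - ‖c₀‖) * infDist x C := by
  have hK : 0 < 2 * r / (r - ‖c₀‖) := div_pos (by linarith [norm_nonneg c₀]) (by linarith)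
  rw [← div_le_iff₀' hK, le_infDist ⟨c₀, hc₀C⟩]
  intro c hc
  obtain ⟨z, hz, hzr, hxz⟩ := exists_mem_segment_mem_closedBall_dist_le (c := c) hc₀ hx
  rw [div_le_iff₀' hK]
  exact (infDist_le_dist_of_mem (mem_inter (hC.segment_subset hc₀C hc hz) hzr)).trans hxz

end

theorem truncation_estimate_general {X : Type*} [NormedAddCommGroup X] [NormedSpace ℝ X]
    (C : Set X) (hne : C.Nonempty) (hcv : Convex ℝ C)
    (r : ℝ) (hr : infDist 0 C < r)
    (x : X) (hx : ‖x‖ ≤ r) :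
    infDist x (C ∩ closedBall 0 r) ≤ (2 * r / (r - infDist 0 C)) * infDist x C := by
  have hbound : ∀ s ∈ Ioo (infDist 0 C) r,
      infDist x (C ∩ closedBall 0 r) ≤ 2 * r / (r - s) * infDist x C := by
    rintro s ⟨hδs, hsr⟩
    obtain ⟨c₀, hc₀C, hc₀s⟩ := (infDist_lt_iff hne).mp hδs
    rw [dist_zero_left] at hc₀s
    refine (hcv.infDist_inter_closedBall_le hc₀C (hc₀s.trans hsr) hx).trans ?_
    have hr0 : 0 < r := (norm_nonneg c₀).trans_lt (hc₀s.trans hsr)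
    gcongr
    exact infDist_nonneg
  have hlim : Tendsto (fun s ↦ 2 * r / (r - s) * infDist x C) (𝓝[>] (infDist 0 C))
      (𝓝 (2 * r / (r - infDist 0 C) * infDist x C)) :=
    ((continuousAt_const.div (continuousAt_const.sub continuousAt_id) (sub_ne_zero.mpr hr.ne')).mul
      continuousAt_const).tendsto.mono_left nhdsWithin_le_nhds
  exact ge_of_tendsto hlim (mem_of_superset (Ioo_mem_nhdsGT hr) hbound)

theorem truncation_estimate {X : Type*} [NormedAddCommGroup X] [NormedSpace ℝ X]
    (C : Set X) (hne : C.Nonempty) (hcl : IsClosed C) (hcv : Convex ℝ C)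
    (r : ℝ) (hr : infDist 0 C < r)
    (x : X) (hx : ‖x‖ ≤ r) :
    infDist x (C ∩ closedBall 0 r) ≤ (2 * r / (r - infDist 0 C)) * infDist x C :=
  truncation_estimate_general C hne hcv r hr x hx
end

section
/- Let H be a real Hilbert space, T > 0, m ∈ ℕ, and let u : [0,T] → H^m and b : [0,T] → ℝ^m be continuous. Define C(t) := {x ∈ H : ⟨u_i(t), x⟩ ≤ b_i(t) for all i = 1,…,m}. Then the following are equivalent: (i) for every t ∈ [0,T] there exists x ∈ H with ⟨u_i(t), x⟩ < b_i(t) for all i; (ii) there exists ε > 0 such that for every t ∈ [0,T] there exists x ∈ H with ⟨u_i(t), x⟩ ≤ b_i(t) − ε for all i. -/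
/-! A strictly feasible point `x` for time `t` has positive slack in each of the finitely many
constraints, so by continuity it satisfies them with a common margin `ε` on a neighbourhood of `t`.
Compactness of `[0, T]` turns these local margins into a single uniform one. -/

open Set Filter Topology
open scoped RealInnerProductSpace

theorem exists_pos_eventually_forall_lt_of_tendsto {X ι : Type*} [Finite ι] {l : Filter X}
    {g : ι → X → ℝ} {a : ι → ℝ} (hg : ∀ i, Tendsto (g i) l (𝓝 (a i))) (ha : ∀ i, 0 < a i) :
    ∃ ε > 0, ∀ᶠ y in l, ∀ i, ε < g i y := by
  have hsmall : ∀ᶠ ε in 𝓝[>] (0 : ℝ), ∀ i, ε < a i :=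
    eventually_all.2 fun i => eventually_nhdsWithin_of_eventually_nhds (eventually_lt_nhds (ha i))
  obtain ⟨ε, hεa, hε⟩ := (hsmall.and self_mem_nhdsWithin).exists
  exact ⟨ε, hε, eventually_all.2 fun i => (hg i).eventually (lt_mem_nhds (hεa i))⟩

theorem IsCompact.exists_pos_forall_of_eventually {X : Type*} [TopologicalSpace X] {K : Set X}
    (hK : IsCompact K) {P : ℝ → X → Prop} (hP : Antitone P)
    (hloc : ∀ x ∈ K, ∃ ε > 0, ∀ᶠ y in 𝓝[K] x, P ε y) :
    ∃ ε > 0, ∀ y ∈ K, P ε y := by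
  refine hK.induction_on (p := fun S => ∃ ε > 0, ∀ y ∈ S, P ε y) ⟨1, one_pos, fun _ => False.elim⟩
    (fun S S' hSS' ⟨ε, hε, hPε⟩ => ⟨ε, hε, fun y hy => hPε y (hSS' hy)⟩) ?_ ?_
  · rintro S S' ⟨δ, hδ, hPδ⟩ ⟨ε, hε, hPε⟩
    refine ⟨min δ ε, lt_min hδ hε, fun y hy => ?_⟩
    rcases hy with hy | hy
    · exact hP (min_le_left δ ε) y (hPδ y hy)
    · exact hP (min_le_right δ ε) y (hPε y hy)
  · intro x hx
    obtain ⟨ε, hε, hev⟩ := hloc x hx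
    exact ⟨{y | P ε y}, hev, ε, hε, fun _ hy => hy⟩

theorem uniform_slater_equiv_strong_general {H : Type*} [NormedAddCommGroup H]
    [InnerProductSpace ℝ H]
    (T : ℝ) (m : ℕ)
    (u : Fin m → ℝ → H) (b : Fin m → ℝ → ℝ)
    (hu : ∀ i, ContinuousOn (u i) (Icc 0 T))
    (hb : ∀ i, ContinuousOn (b i) (Icc 0 T)) :
    (∀ t ∈ Icc (0:ℝ) T, ∃ x : H, ∀ i, ⟪u i t, x⟫ < b i t) ↔
    (∃ ε > (0:ℝ), ∀ t ∈ Icc (0:ℝ) T, ∃ x : H, ∀ i, ⟪u i t, x⟫ ≤ b i t - ε) := by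
  refine ⟨fun hslater => ?_, fun ⟨ε, hε, hstrong⟩ t ht => ?_⟩
  · refine isCompact_Icc.exists_pos_forall_of_eventually
      (fun δ ε hδε s ⟨x, hx⟩ => ⟨x, fun i => (hx i).trans (by linarith)⟩) fun t ht => ?_
    obtain ⟨x, hx⟩ := hslater t ht
    have hslack : ∀ i, Tendsto (fun s => b i s - ⟪u i s, x⟫) (𝓝[Icc 0 T] t)
        (𝓝 (b i t - ⟪u i t, x⟫)) := fun i =>
      ((hb i t ht).sub ((hu i t ht).inner continuousWithinAt_const)).tendsto
    obtain ⟨ε, hε, hev⟩ :=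
      exists_pos_eventually_forall_lt_of_tendsto hslack fun i => sub_pos.2 (hx i)
    exact ⟨ε, hε, hev.mono fun s hs => ⟨x, fun i => by linarith [hs i]⟩⟩
  · obtain ⟨x, hx⟩ := hstrong t ht
    exact ⟨x, fun i => (hx i).trans_lt (sub_lt_self _ hε)⟩

theorem uniform_slater_equiv_strong {H : Type*} [NormedAddCommGroup H]
    [InnerProductSpace ℝ H] [CompleteSpace H]
    (T : ℝ) (hT : 0 < T) (m : ℕ)
    (u : Fin m → ℝ → H) (b : Fin m → ℝ → ℝ)
    (hu : ∀ i, ContinuousOn (u i) (Icc 0 T))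
    (hb : ∀ i, ContinuousOn (b i) (Icc 0 T)) :
    (∀ t ∈ Icc (0:ℝ) T, ∃ x : H, ∀ i, ⟪u i t, x⟫ < b i t) ↔
    (∃ ε > (0:ℝ), ∀ t ∈ Icc (0:ℝ) T, ∃ x : H, ∀ i, ⟪u i t, x⟫ ≤ b i t - ε) :=
  uniform_slater_equiv_strong_general T m u b hu hb
end

section
/- Let H be a real Hilbert space, m ∈ ℕ, and fix u_1,…,u_m ∈ H, b_1,…,b_m ∈ ℝ. Define C := {x ∈ H : ⟨u_i, x⟩ ≤ b_i for all i} and f(x) := max_{i=1,…,m} (⟨u_i, x⟩ − b_i). Suppose x̂ ∈ H satisfies f(x̂) < 0 and x ∈ H satisfies f(x) > 0. Then d(x, C) ≤ (f(x)/(f(x) − f(x̂))) · ‖x − x̂‖. -/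
/-!
The maximum `f` of finitely many affine functions is convex and `C` contains its sublevel set
`{f ≤ 0}`. On the segment from `x` to the Slater point `x̂`, convexity gives
`f((1 - t) x + t x̂) ≤ (1 - t) f(x) + t f(x̂)`, which vanishes for `t = f(x) / (f(x) - f(x̂))`;
that point lies in `C` at distance `t ‖x - x̂‖` from `x`.
-/

open Set
open scoped RealInnerProductSpace

theorem convexOn_ciSup {E ι : Type*} [AddCommGroup E] [Module ℝ E] [Finite ι] {s : Set E}
    {g : ι → E → ℝ} (hs : Convex ℝ s) (hg : ∀ i, ConvexOn ℝ s (g i)) : ConvexOn ℝ s fun y => ⨆ i, g i y := by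
  rcases isEmpty_or_nonempty ι with _ | _
  · simpa only [Real.iSup_of_isEmpty] using convexOn_const (0 : ℝ) hs
  refine ⟨hs, fun x hx y hy a b ha hb hab => ciSup_le fun i => ?_⟩
  calc g i (a • x + b • y) ≤ a * g i x + b * g i y := (hg i).2 hx hy ha hb hab
    _ ≤ a * (⨆ j, g j x) + b * ⨆ j, g j y := by
      gcongr <;> exact le_ciSup (Finite.bddAbove_range fun j => g j _) i

theorem ConvexOn.infDist_sublevel_le {E : Type*} [NormedAddCommGroup E] [NormedSpace ℝ E]
    {s : Set E} {f : E → ℝ} (hf : ConvexOn ℝ s f) {x xh : E} (hx : x ∈ s) (hxh : xh ∈ s)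
    (hfxh : f xh < 0) (hfx : 0 ≤ f x) :
    Metric.infDist x {y ∈ s | f y ≤ 0} ≤ f x / (f x - f xh) * ‖x - xh‖ := by
  have hgap : 0 < f x - f xh := by linarith
  set t := f x / (f x - f xh)
  have ht0 : 0 ≤ t := div_nonneg hfx hgap.le
  have ht1 : t ≤ 1 := (div_le_one hgap).2 (by linarith)
  have hz : (1 - t) • x + t • xh ∈ {y ∈ s | f y ≤ 0} := by
    refine ⟨hf.1 hx hxh (sub_nonneg.2 ht1) ht0 (sub_add_cancel 1 t), ?_⟩
    calc f ((1 - t) • x + t • xh) ≤ (1 - t) * f x + t * f xh :=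
          hf.2 hx hxh (sub_nonneg.2 ht1) ht0 (sub_add_cancel 1 t)
      _ = f x - t * (f x - f xh) := by ring
      _ = 0 := by rw [div_mul_cancel₀ _ hgap.ne', sub_self]
  calc Metric.infDist x {y ∈ s | f y ≤ 0} ≤ dist x ((1 - t) • x + t • xh) :=
        Metric.infDist_le_dist_of_mem hz
    _ = ‖t • (x - xh)‖ := by rw [dist_eq_norm]; congr 1; module
    _ = t * ‖x - xh‖ := by rw [norm_smul, Real.norm_of_nonneg ht0]

theorem distance_estimate_via_slater_general {H : Type*} [NormedAddCommGroup H]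
    [InnerProductSpace ℝ H]
    (m : ℕ) (u : Fin m → H) (b : Fin m → ℝ)
    (f : H → ℝ) (hf : ∀ y, f y = ⨆ i, (⟪u i, y⟫ - b i))
    (C : Set H) (hC : C = {y : H | ∀ i, ⟪u i, y⟫ ≤ b i})
    (xh x : H) (hxh : f xh < 0) (hx : 0 < f x) :
    Metric.infDist x C ≤ (f x / (f x - f xh)) * ‖x - xh‖ := by
  have hconv : ConvexOn ℝ univ f := by
    rw [funext hf]
    exact convexOn_ciSup convex_univ fun i =>
      ((innerₛₗ ℝ (u i)).convexOn convex_univ).sub (concaveOn_const (b i) convex_univ)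
  have hsub : {y ∈ univ | f y ≤ 0} ⊆ C := fun y ⟨_, hy⟩ => by
    rw [hC]
    intro i
    have : ⟪u i, y⟫ - b i ≤ f y :=
      hf y ▸ le_ciSup (f := fun j => ⟪u j, y⟫ - b j) (Finite.bddAbove_range _) i
    linarith
  calc Metric.infDist x C ≤ Metric.infDist x {y ∈ univ | f y ≤ 0} :=
        Metric.infDist_le_infDist_of_subset hsub ⟨xh, mem_univ xh, hxh.le⟩
    _ ≤ _ := hconv.infDist_sublevel_le (mem_univ x) (mem_univ xh) hxh hx.le

theorem distance_estimate_via_slater {H : Type*} [NormedAddCommGroup H]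
    [InnerProductSpace ℝ H] [CompleteSpace H]
    (m : ℕ) (hm : 0 < m) (u : Fin m → H) (b : Fin m → ℝ)
    (f : H → ℝ) (hf : ∀ y, f y = ⨆ i, (⟪u i, y⟫ - b i))
    (C : Set H) (hC : C = {y : H | ∀ i, ⟪u i, y⟫ ≤ b i})
    (xh x : H) (hxh : f xh < 0) (hx : 0 < f x) :
    Metric.infDist x C ≤ (f x / (f x - f xh)) * ‖x - xh‖ :=
  distance_estimate_via_slater_general m u b f hf C hC xh x hxh hx
end

section
/- Let H be a real Hilbert space, m ∈ ℕ, γ > 0, and let u, u' ∈ H^m, b, b' ∈ ℝ^m define polyhedra C := {x : ⟨u_i, x⟩ ≤ b_i ∀i} and C' := {x : ⟨u'_i, x⟩ ≤ b'_i ∀i}. Suppose x̂ ∈ H satisfies ⟨u'_i, x̂⟩ ≤ b'_i − γ for all i. Then for every x ∈ C, d(x, C') ≤ ‖x − x̂‖ · min{1, γ^{-1} · max_{i=1,…,m} [⟨u'_i − u_i, x⟩ + b_i − b'_i]_+ }, where [s]_+ := max{s, 0}. -/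
/-!
Move from `x` towards the Slater point `x̂` to `y := x + t (x̂ - x)` with
`t := min 1 (γ⁻¹ M)`, where `M` is the largest violation of the perturbed constraints at `x`.
Each functional `⟪u'ᵢ, ·⟫` is affine along the segment, so the slack `γ` at `x̂` compensates the
violation `≤ M` at `x` once `t γ ≥ M` (or `t = 1`). Hence `y ∈ C'` and `d(x, C') ≤ ‖x - y‖ = t ‖x - x̂‖`.
-/

open Set
open scoped RealInnerProductSpace

lemma inner_lineMap_le {E : Type*} [NormedAddCommGroup E] [InnerProductSpace ℝ E]
    {v x y : E} {c γ t : ℝ} (ht : 0 ≤ t) (hy : ⟪v, y⟫ ≤ c - γ)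
    (hx : (1 - t) * (⟪v, x⟫ - c) ≤ t * γ) :
    ⟪v, AffineMap.lineMap x y t⟫ ≤ c := by
  rw [AffineMap.lineMap_apply_module, inner_add_right, real_inner_smul_right,
    real_inner_smul_right]
  nlinarith [mul_le_mul_of_nonneg_left hy ht]

lemma one_sub_min_mul_le {a s γ : ℝ} (hγ : 0 < γ) (hs : 0 ≤ s) (ha : a ≤ s) :
    (1 - min 1 (γ⁻¹ * s)) * a ≤ min 1 (γ⁻¹ * s) * γ := by
  rcases le_total 1 (γ⁻¹ * s) with h | h
  · rw [min_eq_left h]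
    linarith
  · have hsγ : γ⁻¹ * s * γ = s := by field_simp
    have h0 : 0 ≤ γ⁻¹ * s := by positivity
    rw [min_eq_right h, hsγ]
    rcases le_total a 0 with ha0 | ha0
    · nlinarith
    · nlinarith

theorem distance_estimate_perturbed_polyhedra_general {H : Type*} [NormedAddCommGroup H]
    [InnerProductSpace ℝ H]
    (m : ℕ) (γ : ℝ) (hγ : 0 < γ)
    (u u' : Fin m → H) (b b' : Fin m → ℝ)
    (C C' : Set H)
    (hC : C = {x : H | ∀ i, ⟪u i, x⟫ ≤ b i})
    (hC' : C' = {x : H | ∀ i, ⟪u' i, x⟫ ≤ b' i})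
    (xh : H) (hxh : ∀ i, ⟪u' i, xh⟫ ≤ b' i - γ)
    (x : H) (hx : x ∈ C) :
    Metric.infDist x C' ≤
      ‖x - xh‖ * min 1 (γ⁻¹ * ⨆ i, max (⟪u' i - u i, x⟫ + b i - b' i) 0) := by
  set M := ⨆ i, max (⟪u' i - u i, x⟫ + b i - b' i) 0
  set t := min 1 (γ⁻¹ * M)
  have hM : 0 ≤ M := Real.iSup_nonneg fun _ => le_max_right _ _
  have ht : 0 ≤ t := le_min zero_le_one (by positivity)
  have hy : AffineMap.lineMap x xh t ∈ C' := by
    rw [hC']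
    intro i
    refine inner_lineMap_le ht (hxh i) (one_sub_min_mul_le hγ hM ?_)
    have hxi : ⟪u i, x⟫ ≤ b i := (hC ▸ hx) i
    calc ⟪u' i, x⟫ - b' i ≤ ⟪u' i - u i, x⟫ + b i - b' i := by
          rw [inner_sub_left]; linarith
      _ ≤ max (⟪u' i - u i, x⟫ + b i - b' i) 0 := le_max_left _ _
      _ ≤ M := le_ciSup (f := fun i => max (⟪u' i - u i, x⟫ + b i - b' i) 0)
          (Set.finite_range _).bddAbove i
  calc Metric.infDist x C' ≤ dist x (AffineMap.lineMap x xh t) :=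
        Metric.infDist_le_dist_of_mem hy
    _ = ‖x - xh‖ * t := by
        rw [dist_left_lineMap, dist_eq_norm, Real.norm_of_nonneg ht, mul_comm]

theorem distance_estimate_perturbed_polyhedra {H : Type*} [NormedAddCommGroup H]
    [InnerProductSpace ℝ H] [CompleteSpace H]
    (m : ℕ) (hm : 0 < m) (γ : ℝ) (hγ : 0 < γ)
    (u u' : Fin m → H) (b b' : Fin m → ℝ)
    (C C' : Set H)
    (hC : C = {x : H | ∀ i, ⟪u i, x⟫ ≤ b i})
    (hC' : C' = {x : H | ∀ i, ⟪u' i, x⟫ ≤ b' i})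
    (xh : H) (hxh : ∀ i, ⟪u' i, xh⟫ ≤ b' i - γ)
    (x : H) (hx : x ∈ C) :
    Metric.infDist x C' ≤
      ‖x - xh‖ * min 1 (γ⁻¹ * ⨆ i, max (⟪u' i - u i, x⟫ + b i - b' i) 0) :=
  distance_estimate_perturbed_polyhedra_general m γ hγ u u' b b' C C' hC hC' xh hxh x hx
end

section
/- Consider H = ℝ², m = 2, and for t ∈ [0,1] the moving polyhedron C(t) := {x ∈ ℝ² : x₂ ≤ 1, t·x₁ − x₂ ≤ 0}. For t ∈ (0,1], let x(t) := (t^{-3}, 1). Then d(x(t), C(t)) = t^{-3} − t^{-1} and max_{i=1,2} [⟨u_i(t), x(t)⟩ − b_i(t)]_+ = t^{-2} − 1, where u_1(t) = (0,1), b_1(t) = 1, u_2(t) = (t,−1), b_2(t) = 0. Consequently, any constant L̃(t) satisfying the Hoffman error bound d(y, C(t)) ≤ L̃(t) · max_i [⟨u_i(t), y⟩ − b_i(t)]_+ for all y ∈ ℝ² must satisfy L̃(t) ≥ t^{-1} for all t ∈ (0,1]. -/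
/-!
For `t > 0` every point of `C(t)` has first coordinate at most `t⁻¹`, and `(t⁻¹, 1)` lies in
`C(t)`, so a point `(a, 1)` with `a ≥ t⁻¹` is at distance exactly `a - t⁻¹` from `C(t)`, while
its residual is `t a - 1`. At `a = t⁻¹ + 1` the distance is `1` and the residual is `t`, forcing any
Hoffman constant to be at least `t⁻¹`.
-/

open Set

noncomputable def vec2 (a b : ℝ) : EuclideanSpace ℝ (Fin 2) :=
  (WithLp.equiv 2 (Fin 2 → ℝ)).symm ![a, b]

@[simp]
lemma vec2_apply_zero (a b : ℝ) : vec2 a b 0 = a := rfl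

@[simp]
lemma vec2_apply_one (a b : ℝ) : vec2 a b 1 = b := rfl

def movingPolyhedron (t : ℝ) : Set (EuclideanSpace ℝ (Fin 2)) :=
  {x | x 1 ≤ 1 ∧ t * x 0 - x 1 ≤ 0}

lemma dist_vec2_vec2_of_snd_eq (a c b : ℝ) : dist (vec2 a b) (vec2 c b) = |a - c| := by
  rw [EuclideanSpace.dist_eq, Fin.sum_univ_two]
  simp [Real.dist_eq, Real.sqrt_sq_eq_abs]

lemma sub_le_infDist_of_forall_apply_le {ι : Type*} [Fintype ι]
    {s : Set (EuclideanSpace ℝ ι)} (hs : s.Nonempty) (x : EuclideanSpace ℝ ι) {i : ι} {c : ℝ}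
    (hc : ∀ y ∈ s, y i ≤ c) : x i - c ≤ Metric.infDist x s := by
  refine (Metric.le_infDist hs).2 fun y hy => ?_
  calc x i - c ≤ x i - y i := by linarith [hc y hy]
    _ ≤ dist (x i) (y i) := (le_abs_self _).trans_eq (Real.dist_eq _ _).symm
    _ ≤ dist x y := PiLp.dist_apply_le x y i

lemma infDist_vec2_movingPolyhedron {t a : ℝ} (ht : 0 < t) (ha : t⁻¹ ≤ a) :
    Metric.infDist (vec2 a 1) (movingPolyhedron t) = a - t⁻¹ := by
  have hvertex : vec2 t⁻¹ 1 ∈ movingPolyhedron t := by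
    simp [movingPolyhedron, mul_inv_cancel₀ ht.ne']
  have hfirst_le : ∀ y ∈ movingPolyhedron t, y 0 ≤ t⁻¹ := fun y ⟨h1, h2⟩ => by
    rw [← one_div, le_div_iff₀ ht]
    linarith
  refine le_antisymm ?_ ?_
  · calc Metric.infDist (vec2 a 1) _ ≤ dist (vec2 a 1) (vec2 t⁻¹ 1) :=
          Metric.infDist_le_dist_of_mem hvertex
      _ = a - t⁻¹ := by rw [dist_vec2_vec2_of_snd_eq, abs_of_nonneg (sub_nonneg.2 ha)]
  · simpa using sub_le_infDist_of_forall_apply_le ⟨_, hvertex⟩ (vec2 a 1) (i := 0) hfirst_le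

lemma residual_vec2 {t a : ℝ} (ha : 1 ≤ t * a) :
    max (max (vec2 a 1 1 - 1) 0) (max (t * vec2 a 1 0 - vec2 a 1 1) 0) = t * a - 1 := by
  simp [ha]

theorem hoffman_constant_unbounded (t : ℝ) (ht : t ∈ Set.Ioc (0:ℝ) 1)
    (C : ℝ → Set (EuclideanSpace ℝ (Fin 2)))
    (hC : ∀ s, C s = {x : EuclideanSpace ℝ (Fin 2) | x 1 ≤ 1 ∧ s * x 0 - x 1 ≤ 0}) :
    Metric.infDist (vec2 (t ^ 3)⁻¹ 1) (C t) = (t ^ 3)⁻¹ - t⁻¹ ∧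
    max (max ((vec2 (t ^ 3)⁻¹ 1) 1 - 1) 0)
        (max (t * (vec2 (t ^ 3)⁻¹ 1) 0 - (vec2 (t ^ 3)⁻¹ 1) 1) 0) = (t ^ 2)⁻¹ - 1 ∧
    ∀ L : ℝ,
      (∀ y : EuclideanSpace ℝ (Fin 2),
        Metric.infDist y (C t) ≤ L * max (max (y 1 - 1) 0) (max (t * y 0 - y 1) 0)) →
      t⁻¹ ≤ L := by
  obtain ⟨ht0, ht1⟩ := ht
  have hCt : C t = movingPolyhedron t := hC t
  have hcube : t * (t ^ 3)⁻¹ = (t ^ 2)⁻¹ := by field_simp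
  have hsq : 1 ≤ (t ^ 2)⁻¹ := one_le_inv₀ (by positivity) |>.2 (pow_le_one₀ ht0.le ht1)
  refine ⟨?_, ?_, fun L hL => ?_⟩
  · rw [hCt]
    exact infDist_vec2_movingPolyhedron ht0
      (inv_anti₀ (by positivity) (pow_le_of_le_one ht0.le ht1 three_ne_zero))
  · rw [residual_vec2 (hcube ▸ hsq), hcube]
  · have hshift : t * (t⁻¹ + 1) = 1 + t := by field_simp
    have key := hL (vec2 (t⁻¹ + 1) 1)
    rw [hCt, infDist_vec2_movingPolyhedron ht0 (by linarith), residual_vec2 (by linarith),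
      hshift] at key
    rw [inv_le_iff_one_le_mul₀' ht0]
    linarith
end

section
/- Let H be a real Hilbert space and suppose the uniform Slater condition holds with constant ε > 0 for continuous controls (ū, b̄): for every t ∈ [0,T] there exists x with ⟨ū_i(t), x⟩ ≤ b̄_i(t) − ε for all i. Let 0 < γ < ε, δ := (2ε + γ)/3, and suppose x̂ : [0,T] → H is continuous with ⟨ū_i(t), x̂(t)⟩ ≤ b̄_i(t) − δ for all t, i. Then for every control (u,b) with max_{t,i} ‖u_i(t) − ū_i(t)‖ + max_{t,i} |b_i(t) − b̄_i(t)| ≤ (ε − γ)/(3(1 + ‖x̂‖_∞)), one has ⟨u_i(t), x̂(t)⟩ ≤ b_i(t) − γ for all t ∈ [0,T] and i = 1,…,m. -/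
open Set
open scoped RealInnerProductSpace

/-! Splitting `⟪u, x̂⟫ = ⟪ū, x̂⟫ + ⟪u - ū, x̂⟫` and applying Cauchy–Schwarz shows that the
perturbation costs at most `‖u - ū‖ ‖x̂‖ + |b - b̄| ≤ (ε - γ)/3` of the margin `δ`, and
`δ - (ε - γ)/3 ≥ γ`. The suprema in the ball are finite by continuity on the compact `[0, T]`. -/

theorem le_csSup_of_continuousOn_of_isCompact {X ι : Type*} [TopologicalSpace X] [Finite ι]
    {K : Set X} (hK : IsCompact K) {f : ι → X → ℝ} (hf : ∀ i, ContinuousOn (f i) K)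
    {t : X} (ht : t ∈ K) (i : ι) :
    f i t ≤ sSup {a : ℝ | ∃ t ∈ K, ∃ i : ι, a = f i t} := by
  have hbdd : BddAbove {a : ℝ | ∃ t ∈ K, ∃ i : ι, a = f i t} := by
    refine (isCompact_iUnion fun i => hK.image_of_continuousOn (hf i)).bddAbove.mono ?_
    rintro _ ⟨t, ht, i, rfl⟩
    exact mem_iUnion.2 ⟨i, t, ht, rfl⟩
  exact le_csSup hbdd ⟨t, ht, i, rfl⟩

theorem le_csSup_of_continuousOn_of_isCompact' {X : Type*} [TopologicalSpace X]
    {K : Set X} (hK : IsCompact K) {f : X → ℝ} (hf : ContinuousOn f K)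
    {t : X} (ht : t ∈ K) :
    f t ≤ sSup {a : ℝ | ∃ t ∈ K, a = f t} := by
  refine le_csSup ((hK.image_of_continuousOn hf).bddAbove.mono ?_) ⟨t, ht, rfl⟩
  rintro _ ⟨t, ht, rfl⟩
  exact ⟨t, ht, rfl⟩

theorem real_inner_le_sub_add_of_perturbation {H : Type*} [NormedAddCommGroup H]
    [InnerProductSpace ℝ H] {u₀ u x : H} {b₀ b δ : ℝ} (h : ⟪u₀, x⟫ ≤ b₀ - δ) :
    ⟪u, x⟫ ≤ b - δ + (‖u - u₀‖ * ‖x‖ + |b - b₀|) := by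
  have hsplit : ⟪u, x⟫ = ⟪u₀, x⟫ + ⟪u - u₀, x⟫ := by rw [inner_sub_left]; ring
  have hcs : ⟪u - u₀, x⟫ ≤ ‖u - u₀‖ * ‖x‖ := real_inner_le_norm _ _
  have hb : b₀ - b ≤ |b - b₀| := by rw [abs_sub_comm]; exact le_abs_self _
  linarith

theorem mul_add_le_of_add_le_div_one_add {A B C r : ℝ} (hA : 0 ≤ A) (hB : 0 ≤ B) (hC : 0 ≤ C)
    (h : A + B ≤ r / (1 + C)) : A * C + B ≤ r := by
  rw [le_div_iff₀ (by positivity)] at h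
  nlinarith [mul_nonneg hB hC]

theorem uniform_gamma_slater_point_general {H : Type*} [NormedAddCommGroup H]
    [InnerProductSpace ℝ H]
    (T : ℝ) (m : ℕ)
    (ub u : Fin m → ℝ → H) (bb bfn : Fin m → ℝ → ℝ)
    (hubc : ∀ i, ContinuousOn (ub i) (Icc 0 T))
    (hbbc : ∀ i, ContinuousOn (bb i) (Icc 0 T))
    (huc : ∀ i, ContinuousOn (u i) (Icc 0 T))
    (hbc : ∀ i, ContinuousOn (bfn i) (Icc 0 T))
    (ε : ℝ)
    (γ δ : ℝ) (hγε : γ < ε) (hδ : δ = (2 * ε + γ) / 3)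
    (xhat : ℝ → H) (hxhatc : ContinuousOn xhat (Icc 0 T))
    (hxhat : ∀ t ∈ Icc (0:ℝ) T, ∀ i, ⟪ub i t, xhat t⟫ ≤ bb i t - δ)
    (hball :
      sSup {a : ℝ | ∃ t ∈ Icc (0:ℝ) T, ∃ i : Fin m, a = ‖u i t - ub i t‖} +
      sSup {a : ℝ | ∃ t ∈ Icc (0:ℝ) T, ∃ i : Fin m, a = |bfn i t - bb i t|} ≤
      (ε - γ) / (3 * (1 + sSup {a : ℝ | ∃ t ∈ Icc (0:ℝ) T, a = ‖xhat t‖}))) :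
    ∀ t ∈ Icc (0:ℝ) T, ∀ i, ⟪u i t, xhat t⟫ ≤ bfn i t - γ := by
  set A := sSup {a : ℝ | ∃ t ∈ Icc (0:ℝ) T, ∃ i : Fin m, a = ‖u i t - ub i t‖}
  set B := sSup {a : ℝ | ∃ t ∈ Icc (0:ℝ) T, ∃ i : Fin m, a = |bfn i t - bb i t|}
  set C := sSup {a : ℝ | ∃ t ∈ Icc (0:ℝ) T, a = ‖xhat t‖}
  intro t ht i
  have hA : ‖u i t - ub i t‖ ≤ A := le_csSup_of_continuousOn_of_isCompact
    (f := fun i t => ‖u i t - ub i t‖) isCompact_Icc (fun i => ((huc i).sub (hubc i)).norm) ht i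
  have hB : |bfn i t - bb i t| ≤ B := le_csSup_of_continuousOn_of_isCompact
    (f := fun i t => |bfn i t - bb i t|) isCompact_Icc (fun i => ((hbc i).sub (hbbc i)).abs) ht i
  have hC : ‖xhat t‖ ≤ C := le_csSup_of_continuousOn_of_isCompact' isCompact_Icc hxhatc.norm ht
  have hsmall : ‖u i t - ub i t‖ * ‖xhat t‖ + |bfn i t - bb i t| ≤ δ - γ :=
    calc ‖u i t - ub i t‖ * ‖xhat t‖ + |bfn i t - bb i t|
        ≤ A * C + B := by gcongr; exact (norm_nonneg _).trans hA
      _ ≤ (ε - γ) / 3 :=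
          mul_add_le_of_add_le_div_one_add ((norm_nonneg _).trans hA)
            ((abs_nonneg _).trans hB) ((norm_nonneg _).trans hC) (by rwa [div_div])
      _ ≤ δ - γ := by rw [hδ]; linarith
  linarith [real_inner_le_sub_add_of_perturbation (b := bfn i t) (u := u i t) (hxhat t ht i)]

theorem uniform_gamma_slater_point {H : Type*} [NormedAddCommGroup H]
    [InnerProductSpace ℝ H] [CompleteSpace H]
    (T : ℝ) (hT : 0 < T) (m : ℕ)
    (ub u : Fin m → ℝ → H) (bb bfn : Fin m → ℝ → ℝ)
    (hubc : ∀ i, ContinuousOn (ub i) (Icc 0 T))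
    (hbbc : ∀ i, ContinuousOn (bb i) (Icc 0 T))
    (huc : ∀ i, ContinuousOn (u i) (Icc 0 T))
    (hbc : ∀ i, ContinuousOn (bfn i) (Icc 0 T))
    (ε : ℝ) (hε : 0 < ε)
    (hSlater : ∀ t ∈ Icc (0:ℝ) T, ∃ x : H, ∀ i, ⟪ub i t, x⟫ ≤ bb i t - ε)
    (γ δ : ℝ) (hγ : 0 < γ) (hγε : γ < ε) (hδ : δ = (2 * ε + γ) / 3)
    (xhat : ℝ → H) (hxhatc : ContinuousOn xhat (Icc 0 T))
    (hxhat : ∀ t ∈ Icc (0:ℝ) T, ∀ i, ⟪ub i t, xhat t⟫ ≤ bb i t - δ)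
    (hball :
      sSup {a : ℝ | ∃ t ∈ Icc (0:ℝ) T, ∃ i : Fin m, a = ‖u i t - ub i t‖} +
      sSup {a : ℝ | ∃ t ∈ Icc (0:ℝ) T, ∃ i : Fin m, a = |bfn i t - bb i t|} ≤
      (ε - γ) / (3 * (1 + sSup {a : ℝ | ∃ t ∈ Icc (0:ℝ) T, a = ‖xhat t‖}))) :
    ∀ t ∈ Icc (0:ℝ) T, ∀ i, ⟪u i t, xhat t⟫ ≤ bfn i t - γ :=
  uniform_gamma_slater_point_general T m ub u bb bfn hubc hbbc huc hbc ε γ δ hγε hδ xhat hxhatc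
    hxhat hball
end

section
/- Let H be a Hilbert space, (u,b) controls with polyhedron C(t) := {x : ⟨u_i(t),x⟩ ≤ b_i(t) ∀i}, and suppose x : [0,T] → H is differentiable at t ∈ (0,T) with x(s) ∈ C(s) for all s near t, and each u_i, b_i differentiable at t. If x̂ ∈ H satisfies ⟨u_i(t), x̂⟩ ≤ b_i(t) − δ with δ > 0 for all i, and −ẋ(t) ∈ N_{C(t)}(x(t)), then ‖ẋ(t)‖ ≤ δ^{-1} ‖x(t) − x̂‖ · Σᵢ (‖u̇_i(t)‖·‖x(t)‖ + |ḃ_i(t)|). -/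
/-!
For `s < t` near `t` the point `x s` lies in `C s`, so it violates each constraint of `C t` by at
most `ε s = ∑ i, |⟪u i t - u i s, x s⟫ + (b i s - b i t)|`; this `ε` is nonnegative, vanishes at
`t`, and has left derivative `-L` there, `L = ∑ i, |ḃᵢ - ⟪u̇ᵢ, x t⟫|`. Pushing `x s` towards the
Slater point `x̂` by the fraction `ε s / δ` lands in `C t`, so the normal cone condition gives
`0 ≤ ⟪ẋ, x s - x t⟫ + ε s / δ * ⟪ẋ, x̂ - x s⟫`. The right side vanishes at `s = t`, hence its
left derivative `‖ẋ‖² - L / δ * ⟪ẋ, x̂ - x t⟫` is nonpositive, and Cauchy–Schwarz concludes.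
-/

open Set
open scoped RealInnerProductSpace

def normalCone {H : Type*} [NormedAddCommGroup H] [InnerProductSpace ℝ H]
    (C : Set H) (x : H) : Set H :=
  {v | ∀ y ∈ C, ⟪v, y - x⟫ ≤ 0}

open Filter Topology

section

variable {H : Type*} [NormedAddCommGroup H] [InnerProductSpace ℝ H]

theorem inner_add_smul_sub_le_of_slater {u y xhat : H} {b δ ε : ℝ} (hδ : 0 < δ) (hε : 0 ≤ ε)
    (hεδ : ε ≤ δ) (hy : ⟪u, y⟫ ≤ b + ε) (hxhat : ⟪u, xhat⟫ ≤ b - δ) :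
    ⟪u, y + (ε / δ) • (xhat - y)⟫ ≤ b := by
  have hr0 : 0 ≤ ε / δ := div_nonneg hε hδ.le
  have hr1 : ε / δ ≤ 1 := (div_le_one hδ).2 hεδ
  have hrδ : ε / δ * δ = ε := div_mul_cancel₀ ε hδ.ne'
  rw [inner_add_right, real_inner_smul_right, inner_sub_right]
  nlinarith [mul_le_mul_of_nonneg_left hy (sub_nonneg.2 hr1),
    mul_le_mul_of_nonneg_left hxhat hr0, mul_nonneg hr0 hε]

theorem inner_nonneg_of_neg_mem_normalCone_of_slater {ι : Type*} {u : ι → H} {b : ι → ℝ}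
    {v x y xhat : H} {δ ε : ℝ} (hN : -v ∈ normalCone {z | ∀ i, ⟪u i, z⟫ ≤ b i} x)
    (hδ : 0 < δ) (hxhat : ∀ i, ⟪u i, xhat⟫ ≤ b i - δ) (hε : 0 ≤ ε) (hεδ : ε ≤ δ)
    (hy : ∀ i, ⟪u i, y⟫ ≤ b i + ε) :
    0 ≤ ⟪v, y - x⟫ + ε / δ * ⟪v, xhat - y⟫ := by
  have h := hN _ fun i => inner_add_smul_sub_le_of_slater hδ hε hεδ (hy i) (hxhat i)
  rw [add_sub_right_comm, inner_neg_left, inner_add_right, real_inner_smul_right] at h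
  linarith

theorem norm_le_mul_norm_of_sq_le_inner {v w : H} {c : ℝ} (hc : 0 ≤ c)
    (h : ‖v‖ ^ 2 ≤ c * ⟪v, w⟫) : ‖v‖ ≤ c * ‖w‖ := by
  rcases (norm_nonneg v).eq_or_lt with hv | hv
  · rw [← hv]; positivity
  · refine le_of_mul_le_mul_left ?_ hv
    calc ‖v‖ * ‖v‖ = ‖v‖ ^ 2 := (sq _).symm
      _ ≤ c * ⟪v, w⟫ := h
      _ ≤ c * (‖v‖ * ‖w‖) := by gcongr; exact real_inner_le_norm v w
      _ = ‖v‖ * (c * ‖w‖) := by ring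

theorem HasDerivAt.hasDerivWithinAt_abs_Iio {g : ℝ → ℝ} {g' a : ℝ} (hg : HasDerivAt g g' a)
    (ha : g a = 0) : HasDerivWithinAt (fun s => |g s|) (-|g'|) (Iio a) a := by
  rw [hasDerivWithinAt_iff_tendsto_slope' self_notMem_Iio]
  refine ((hasDerivAt_iff_tendsto_slope.1 hg).abs.neg.mono_left
    (nhdsWithin_mono _ fun s hs => ne_of_lt hs)).congr' ?_
  filter_upwards [self_mem_nhdsWithin] with s (hs : s < a)
  rw [slope_def_field, slope_def_field, ha, abs_zero, sub_zero, sub_zero, abs_div,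
    abs_of_neg (sub_neg.2 hs), div_neg, neg_neg]

theorem HasDerivWithinAt.nonpos_of_eventually_nonneg_Iio {h : ℝ → ℝ} {h' a : ℝ}
    (hd : HasDerivWithinAt h h' (Iio a) a) (ha : h a = 0) (hpos : ∀ᶠ s in 𝓝[<] a, 0 ≤ h s) :
    h' ≤ 0 := by
  rw [hasDerivWithinAt_iff_tendsto_slope' self_notMem_Iio] at hd
  refine le_of_tendsto hd ?_
  filter_upwards [hpos, self_mem_nhdsWithin] with s hs (has : s < a)
  rw [slope_def_field, ha, sub_zero]
  exact div_nonpos_of_nonneg_of_nonpos hs (sub_neg.2 has).le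

theorem hasDerivAt_inner_sub_add_sub {u x : ℝ → H} {b : ℝ → ℝ} {ud xd : H} {bd t : ℝ}
    (hu : HasDerivAt u ud t) (hb : HasDerivAt b bd t) (hx : HasDerivAt x xd t) :
    HasDerivAt (fun s => ⟪u t - u s, x s⟫ + (b s - b t)) (bd - ⟪ud, x t⟫) t := by
  refine ((((hasDerivAt_const t (u t)).sub hu).inner ℝ hx).fun_add
    (hb.sub_const (b t))).congr_deriv ?_
  simp [sub_eq_add_neg, add_comm]

theorem norm_le_of_neg_mem_normalCone_of_slater {ι : Type*} {u : ι → H} {b : ι → ℝ}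
    {v xhat : H} {x : ℝ → H} {ε : ℝ → ℝ} {t δ L : ℝ}
    (hN : -v ∈ normalCone {z | ∀ i, ⟪u i, z⟫ ≤ b i} (x t)) (hδ : 0 < δ)
    (hxhat : ∀ i, ⟪u i, xhat⟫ ≤ b i - δ) (hx : HasDerivWithinAt x v (Iio t) t)
    (hε : HasDerivWithinAt ε (-L) (Iio t) t) (hεt : ε t = 0)
    (hε_nonneg : ∀ᶠ s in 𝓝[<] t, 0 ≤ ε s)
    (hviol : ∀ᶠ s in 𝓝[<] t, ∀ i, ⟪u i, x s⟫ ≤ b i + ε s) :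
    ‖v‖ ≤ L / δ * ‖x t - xhat‖ := by
  have hεδ : ∀ᶠ s in 𝓝[<] t, ε s ≤ δ := by
    have hlim : Tendsto ε (𝓝[<] t) (𝓝 0) := by
      simpa [ContinuousWithinAt, hεt] using hε.continuousWithinAt
    exact hlim.eventually_le_const hδ
  have hkey : ∀ᶠ s in 𝓝[<] t, 0 ≤ ⟪v, x s - x t⟫ + ε s / δ * ⟪v, xhat - x s⟫ := by
    filter_upwards [hε_nonneg, hεδ, hviol] with s hs0 hsδ hs
    exact inner_nonneg_of_neg_mem_normalCone_of_slater hN hδ hxhat hs0 hsδ hs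
  have hderiv : HasDerivWithinAt (fun s => ⟪v, x s - x t⟫ + ε s / δ * ⟪v, xhat - x s⟫)
      (‖v‖ ^ 2 - L / δ * ⟪v, xhat - x t⟫) (Iio t) t := by
    have hv := hasDerivWithinAt_const t (Iio t) v
    refine ((hv.inner ℝ (hx.sub_const (x t))).add
      ((hε.div_const δ).mul (hv.inner ℝ (hx.const_sub xhat)))).congr_deriv ?_
    simp [hεt, neg_div, sub_eq_add_neg]
  have hL : 0 ≤ L := neg_nonpos.1 (hε.nonpos_of_eventually_nonneg_Iio hεt hε_nonneg)
  have hsq := hderiv.nonpos_of_eventually_nonneg_Iio (by simp [hεt]) hkey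
  rw [norm_sub_rev]
  exact norm_le_mul_norm_of_sq_le_inner (by positivity) (by linarith)

end

theorem sweeping_velocity_estimate_general {H : Type*} [NormedAddCommGroup H]
    [InnerProductSpace ℝ H]
    (m : ℕ) (t : ℝ)
    (u : Fin m → ℝ → H) (b : Fin m → ℝ → ℝ) (x : ℝ → H)
    (ud : Fin m → H) (bd : Fin m → ℝ) (xd : H)
    (hud : ∀ i, HasDerivAt (u i) (ud i) t)
    (hbd : ∀ i, HasDerivAt (b i) (bd i) t)
    (hxd : HasDerivAt x xd t)
    (C : ℝ → Set H) (hC : ∀ s, C s = {y : H | ∀ i, ⟪u i s, y⟫ ≤ b i s})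
    (hmem : ∀ᶠ s in nhds t, x s ∈ C s)
    (δ : ℝ) (hδ : 0 < δ) (xhat : H) (hxhat : ∀ i, ⟪u i t, xhat⟫ ≤ b i t - δ)
    (hN : -xd ∈ normalCone (C t) (x t)) :
    ‖xd‖ ≤ δ⁻¹ * ‖x t - xhat‖ * ∑ i, (‖ud i‖ * ‖x t‖ + |bd i|) := by
  set g : Fin m → ℝ → ℝ := fun i s => ⟪u i t - u i s, x s⟫ + (b i s - b i t)
  set L := ∑ i, |bd i - ⟪ud i, x t⟫|
  have hε : HasDerivWithinAt (fun s => ∑ i, |g i s|) (-L) (Iio t) t := by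
    simpa only [L, Finset.sum_neg_distrib] using HasDerivWithinAt.fun_sum fun i _ =>
      (hasDerivAt_inner_sub_add_sub (hud i) (hbd i) hxd).hasDerivWithinAt_abs_Iio (by simp)
  have hviol : ∀ᶠ s in 𝓝[<] t, ∀ i, ⟪u i t, x s⟫ ≤ b i t + ∑ j, |g j s| := by
    filter_upwards [nhdsWithin_le_nhds hmem] with s hs i
    have hgi : ⟪u i t - u i s, x s⟫ + (b i s - b i t) ≤ ∑ j, |g j s| :=
      (le_abs_self (g i s)).trans (Finset.single_le_sum (fun j _ => abs_nonneg (g j s))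
        (Finset.mem_univ i))
    have hsi := (hC s ▸ hs) i
    rw [inner_sub_left] at hgi
    linarith
  calc ‖xd‖ ≤ L / δ * ‖x t - xhat‖ :=
        norm_le_of_neg_mem_normalCone_of_slater (hC t ▸ hN) hδ hxhat hxd.hasDerivWithinAt hε
          (by simp [g]) (.of_forall fun s => Finset.sum_nonneg fun i _ => abs_nonneg _) hviol
    _ = δ⁻¹ * ‖x t - xhat‖ * L := by ring
    _ ≤ δ⁻¹ * ‖x t - xhat‖ * ∑ i, (‖ud i‖ * ‖x t‖ + |bd i|) := by
        gcongr
        exact Finset.sum_le_sum fun i _ => (abs_sub _ _).trans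
          (by rw [add_comm]; gcongr; exact abs_real_inner_le_norm _ _)

theorem sweeping_velocity_estimate {H : Type*} [NormedAddCommGroup H]
    [InnerProductSpace ℝ H] [CompleteSpace H]
    (m : ℕ) (T t : ℝ) (ht : t ∈ Ioo (0:ℝ) T)
    (u : Fin m → ℝ → H) (b : Fin m → ℝ → ℝ) (x : ℝ → H)
    (ud : Fin m → H) (bd : Fin m → ℝ) (xd : H)
    (hud : ∀ i, HasDerivAt (u i) (ud i) t)
    (hbd : ∀ i, HasDerivAt (b i) (bd i) t)
    (hxd : HasDerivAt x xd t)
    (C : ℝ → Set H) (hC : ∀ s, C s = {y : H | ∀ i, ⟪u i s, y⟫ ≤ b i s})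
    (hmem : ∀ᶠ s in nhds t, x s ∈ C s)
    (δ : ℝ) (hδ : 0 < δ) (xhat : H) (hxhat : ∀ i, ⟪u i t, xhat⟫ ≤ b i t - δ)
    (hN : -xd ∈ normalCone (C t) (x t)) :
    ‖xd‖ ≤ δ⁻¹ * ‖x t - xhat‖ * ∑ i, (‖ud i‖ * ‖x t‖ + |bd i|) :=
  sweeping_velocity_estimate_general m t u b x ud bd xd hud hbd hxd C hC hmem δ hδ xhat hxhat hN
end
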